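/- arXiv:1408.0519 — 5 statements merged into one kernel-verified Lean document; each statement's English description precedes it below -/
import Mathlib

section
/- Let X be a positive definite matrix of the block diagonal form X = diag[X₁,…,X_s, x₁ I_{m₁}, …, x_f I_{m_f}] with X_i positive definite matrices and x_j positive reals, and suppose M* X M - X ≺ 0 (negative definite). Then for every Δ of the block form diag[δ₁ I_{n₁},…,δ_s I_{n_s}, Δ₁,…,Δ_f] with |δ_i| ≤ 1 and ‖Δ_j‖ ≤ 1, the matrix I - Δ M is invertible. -/
open Matrix
open scoped ComplexOrder MatrixOrder

/-!
If `I - Δ M` were singular, some `v ≠ 0` would satisfy `v = Δ M v`. Writing `w = M v`, the Stein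
inequality gives `w* X w < v* X v`, while every admissible `Δ` satisfies `Δ* X Δ ≤ X` (each block
of `Δ` either is a scalar of modulus at most one, or meets a scalar block `xⱼ I` of `X` and is a
contraction), so `v* X v = w* Δ* X Δ w ≤ w* X w`.
-/

namespace Matrix

variable {𝕜 : Type*} [RCLike 𝕜]

theorem star_dotProduct_conjTranspose_mul_mul_mulVec {m n : Type*} [Fintype m] [Fintype n]
    (A : Matrix m n 𝕜) (X : Matrix m m 𝕜) (v : n → 𝕜) :
    star v ⬝ᵥ (Aᴴ * X * A) *ᵥ v = star (A *ᵥ v) ⬝ᵥ X *ᵥ (A *ᵥ v) := by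
  simp only [star_mulVec, dotProduct_mulVec, vecMul_vecMul]

theorem isUnit_one_sub_mul_of_posDef_of_le {n : Type*} [Fintype n] [DecidableEq n]
    {M Δ X : Matrix n n 𝕜} (hM : (X - Mᴴ * X * M).PosDef) (hΔ : Δᴴ * X * Δ ≤ X) :
    IsUnit (1 - Δ * M) := by
  rw [isUnit_iff_isUnit_det, isUnit_iff_ne_zero]
  intro hdet
  obtain ⟨v, hv0, hv⟩ := exists_mulVec_eq_zero_iff.mpr hdet
  have hΔMv : Δ *ᵥ (M *ᵥ v) = v := by
    rwa [sub_mulVec, one_mulVec, sub_eq_zero, ← mulVec_mulVec, eq_comm] at hv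
  have hlt := hM.dotProduct_mulVec_pos hv0
  have hle := (le_iff.mp hΔ).dotProduct_mulVec_nonneg (M *ᵥ v)
  rw [sub_mulVec, dotProduct_sub, star_dotProduct_conjTranspose_mul_mul_mulVec] at hlt hle
  rw [hΔMv] at hle
  simpa using add_pos_of_pos_of_nonneg hlt hle

theorem PosSemidef.blockDiagonal' {ι : Type*} [Fintype ι] [DecidableEq ι] {κ : ι → Type*}
    [∀ i, Fintype (κ i)] [∀ i, DecidableEq (κ i)] {A : ∀ i, Matrix (κ i) (κ i) 𝕜}
    (hA : ∀ i, (A i).PosSemidef) : (blockDiagonal' A).PosSemidef := by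
  choose B hB using fun i => CStarAlgebra.nonneg_iff_eq_star_mul_self.mp (hA i).nonneg
  rw [funext hB]
  simpa [star_eq_conjTranspose, blockDiagonal'_mul, blockDiagonal'_conjTranspose] using
    posSemidef_conjTranspose_mul_self (Matrix.blockDiagonal' B)

theorem PosSemidef.fromBlocks_zero {m n : Type*} [Fintype m] [Fintype n] [DecidableEq m]
    [DecidableEq n] {A : Matrix m m 𝕜} {D : Matrix n n 𝕜} (hA : A.PosSemidef)
    (hD : D.PosSemidef) : (fromBlocks A 0 0 D).PosSemidef := by
  obtain ⟨B, rfl⟩ := CStarAlgebra.nonneg_iff_eq_star_mul_self.mp hA.nonneg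
  obtain ⟨C, rfl⟩ := CStarAlgebra.nonneg_iff_eq_star_mul_self.mp hD.nonneg
  simpa [fromBlocks_multiply, fromBlocks_conjTranspose, star_eq_conjTranspose] using
    posSemidef_conjTranspose_mul_self (fromBlocks B 0 0 C)

theorem blockDiagonal'_conjTranspose_mul_mul_le {ι : Type*} [Fintype ι] [DecidableEq ι]
    {κ : ι → Type*} [∀ i, Fintype (κ i)] [∀ i, DecidableEq (κ i)]
    {Δ X : ∀ i, Matrix (κ i) (κ i) 𝕜} (h : ∀ i, (Δ i)ᴴ * X i * Δ i ≤ X i) :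
    (blockDiagonal' Δ)ᴴ * blockDiagonal' X * blockDiagonal' Δ ≤ blockDiagonal' X := by
  rw [le_iff, blockDiagonal'_conjTranspose, ← blockDiagonal'_mul, ← blockDiagonal'_mul,
    ← blockDiagonal'_sub]
  exact PosSemidef.blockDiagonal' fun i => le_iff.mp (h i)

theorem fromBlocks_conjTranspose_mul_mul_le {m n : Type*} [Fintype m] [Fintype n] [DecidableEq m]
    [DecidableEq n] {Δ₁ X₁ : Matrix m m 𝕜} {Δ₂ X₂ : Matrix n n 𝕜} (h₁ : Δ₁ᴴ * X₁ * Δ₁ ≤ X₁)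
    (h₂ : Δ₂ᴴ * X₂ * Δ₂ ≤ X₂) :
    (fromBlocks Δ₁ 0 0 Δ₂)ᴴ * fromBlocks X₁ 0 0 X₂ * fromBlocks Δ₁ 0 0 Δ₂ ≤
      fromBlocks X₁ 0 0 X₂ := by
  rw [le_iff]
  convert PosSemidef.fromBlocks_zero (le_iff.mp h₁) (le_iff.mp h₂) using 1
  simp [fromBlocks_conjTranspose, fromBlocks_multiply, sub_eq_add_neg, fromBlocks_neg,
    fromBlocks_add]

theorem smul_one_conjTranspose_mul_mul_smul_one_le {n : Type*} [Fintype n] [DecidableEq n]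
    {X : Matrix n n 𝕜} {c : 𝕜} (hX : X.PosSemidef) (hc : ‖c‖ ≤ 1) :
    (c • 1 : Matrix n n 𝕜)ᴴ * X * (c • 1) ≤ X := by
  have hc' : (0 : 𝕜) ≤ 1 - star c * c := by
    rw [RCLike.star_def, RCLike.conj_mul, ← RCLike.ofReal_pow, ← RCLike.ofReal_one,
      ← RCLike.ofReal_sub, RCLike.ofReal_nonneg, sub_nonneg]
    exact pow_le_one₀ (norm_nonneg c) hc
  rw [le_iff]
  convert hX.smul hc' using 1
  simp [sub_smul, smul_smul, mul_comm]

open scoped Matrix.Norms.L2Operator in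
theorem conjTranspose_mul_self_le_one {n : Type*} [Fintype n] [DecidableEq n] {Δ : Matrix n n ℂ}
    (h : ‖toEuclideanCLM (𝕜 := ℂ) Δ‖ ≤ 1) : Δᴴ * Δ ≤ 1 := by
  rw [← cstar_norm_def] at h
  refine (CStarAlgebra.norm_le_one_iff_of_nonneg (star Δ * Δ)).mp ?_
  rw [CStarRing.norm_star_mul_self]
  exact mul_le_one₀ h (norm_nonneg _) h

theorem conjTranspose_mul_smul_one_mul_le {n : Type*} [Fintype n] [DecidableEq n]
    {Δ : Matrix n n ℂ} {c : ℂ} (hc : 0 ≤ c) (hΔ : ‖toEuclideanCLM (𝕜 := ℂ) Δ‖ ≤ 1) :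
    Δᴴ * (c • 1) * Δ ≤ c • 1 := by
  rw [le_iff]
  convert (le_iff.mp (conjTranspose_mul_self_le_one hΔ)).smul hc using 1
  simp [smul_sub]

end Matrix

/-- Structured small gain via a structured Stein inequality.  Let
`X = diag[X₁,…,X_s, x₁ I_{m₁}, …, x_f I_{m_f}]` be positive definite
(`Xᵢ` positive definite matrices, `xⱼ > 0`) and suppose `M* X M - X ≺ 0`.
Then for every `Δ = diag[δ₁ I_{n₁},…,δ_s I_{n_s}, Δ₁,…,Δ_f]` with `|δᵢ| ≤ 1`
and `‖Δⱼ‖ ≤ 1` (operator norm), the matrix `I - Δ M` is invertible. -/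
theorem structured_small_gain (s f : ℕ) (n : Fin s → ℕ) (m : Fin f → ℕ)
    (M : Matrix ((Σ i : Fin s, Fin (n i)) ⊕ (Σ j : Fin f, Fin (m j)))
                ((Σ i : Fin s, Fin (n i)) ⊕ (Σ j : Fin f, Fin (m j))) ℂ)
    (Xs : ∀ i : Fin s, Matrix (Fin (n i)) (Fin (n i)) ℂ)
    (xv : Fin f → ℝ)
    (hXs : ∀ i, (Xs i).PosDef) (hxv : ∀ j, 0 < xv j)
    (X : Matrix ((Σ i : Fin s, Fin (n i)) ⊕ (Σ j : Fin f, Fin (m j)))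
                ((Σ i : Fin s, Fin (n i)) ⊕ (Σ j : Fin f, Fin (m j))) ℂ)
    (hX : X = Matrix.fromBlocks (Matrix.blockDiagonal' Xs) 0 0
        (Matrix.blockDiagonal' fun j => ((xv j : ℂ)) • (1 : Matrix (Fin (m j)) (Fin (m j)) ℂ)))
    (hStein : (-(Mᴴ * X * M - X)).PosDef) :
    ∀ (δ : Fin s → ℂ) (Δs : ∀ j : Fin f, Matrix (Fin (m j)) (Fin (m j)) ℂ),
      (∀ i, ‖δ i‖ ≤ 1) →
      (∀ j, ‖Matrix.toEuclideanCLM (𝕜 := ℂ) (Δs j)‖ ≤ 1) →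
      IsUnit ((1 : Matrix ((Σ i : Fin s, Fin (n i)) ⊕ (Σ j : Fin f, Fin (m j)))
                          ((Σ i : Fin s, Fin (n i)) ⊕ (Σ j : Fin f, Fin (m j))) ℂ)
        - (Matrix.fromBlocks
            (Matrix.blockDiagonal' fun i => (δ i) • (1 : Matrix (Fin (n i)) (Fin (n i)) ℂ))
            0 0 (Matrix.blockDiagonal' Δs)) * M) := by
  intro δ Δs hδ hΔ
  rw [neg_sub] at hStein
  refine isUnit_one_sub_mul_of_posDef_of_le hStein ?_
  rw [hX]
  exact fromBlocks_conjTranspose_mul_mul_le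
    (blockDiagonal'_conjTranspose_mul_mul_le fun i =>
      smul_one_conjTranspose_mul_mul_smul_one_le (hXs i).posSemidef (hδ i))
    (blockDiagonal'_conjTranspose_mul_mul_le fun j =>
      conjTranspose_mul_smul_one_mul_le (Complex.zero_le_real.mpr (hxv j).le) (hΔ j))
end

section
/- Douglas lemma (adjoint form): Given Hilbert space operators A : Z → Y and B : Z → X, there exists an operator T : Y → X with T A = B and ‖T‖ ≤ 1 if and only if B*B ≼ A*A (i.e., A*A − B*B is a positive operator). -/
/-!
Both sides amount to `‖B z‖ ≤ ‖A z‖` for all `z`, because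
`re ⟪(A*A - B*B) z, z⟫ = ‖A z‖² - ‖B z‖²`. Given this bound, `A z ↦ B z` is a well-defined
contraction on the range of `A`; extend it by continuity to the closure of the range and by zero
on its orthogonal complement.
-/

open ContinuousLinearMap

theorem LinearMap.denseRange_codRestrict_topologicalClosure_range {R M N : Type*} [Semiring R]
    [AddCommMonoid M] [Module R M] [AddCommMonoid N] [Module R N] [TopologicalSpace N]
    [ContinuousAdd N] [ContinuousConstSMul R N] (A : M →ₗ[R] N)
    (h : ∀ x, A x ∈ (LinearMap.range A).topologicalClosure) :
    DenseRange (A.codRestrict _ h) := by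
  rw [DenseRange, Subtype.dense_iff, ← Set.range_comp]
  exact fun y hy => hy

section Positivity

variable {𝕜 E F G : Type*} [RCLike 𝕜]
  [NormedAddCommGroup E] [InnerProductSpace 𝕜 E] [CompleteSpace E]
  [NormedAddCommGroup F] [InnerProductSpace 𝕜 F] [CompleteSpace F]
  [NormedAddCommGroup G] [InnerProductSpace 𝕜 G] [CompleteSpace G]

theorem ContinuousLinearMap.reApplyInnerSelf_adjoint_comp_self_sub (A : E →L[𝕜] F)
    (B : E →L[𝕜] G) (x : E) :
    (adjoint A ∘L A - adjoint B ∘L B).reApplyInnerSelf x = ‖A x‖ ^ 2 - ‖B x‖ ^ 2 := by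
  simp only [reApplyInnerSelf, sub_apply, comp_apply, inner_sub_left, adjoint_inner_left,
    map_sub, inner_self_eq_norm_sq]

theorem ContinuousLinearMap.isPositive_adjoint_comp_self_sub_iff (A : E →L[𝕜] F)
    (B : E →L[𝕜] G) :
    (adjoint A ∘L A - adjoint B ∘L B).IsPositive ↔ ∀ x, ‖B x‖ ≤ ‖A x‖ := by
  have hsymm : (adjoint A ∘L A - adjoint B ∘L B).IsSymmetric :=
    (isPositive_adjoint_comp_self A).isSymmetric.sub (isPositive_adjoint_comp_self B).isSymmetric
  simp only [isPositive_def, hsymm, true_and, reApplyInnerSelf_adjoint_comp_self_sub, sub_nonneg,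
    sq_le_sq₀ (norm_nonneg _) (norm_nonneg _)]

end Positivity

theorem LinearMap.exists_comp_eq_of_norm_apply_le {𝕜 E F G : Type*} [RCLike 𝕜] [AddCommGroup E]
    [Module 𝕜 E] [NormedAddCommGroup F] [InnerProductSpace 𝕜 F] [CompleteSpace F]
    [NormedAddCommGroup G] [NormedSpace 𝕜 G] [CompleteSpace G] {A : E →ₗ[𝕜] F} {B : E →ₗ[𝕜] G}
    (h : ∀ x, ‖B x‖ ≤ ‖A x‖) : ∃ T : F →L[𝕜] G, T ∘ₗ A = B ∧ ‖T‖ ≤ 1 := by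
  set M := (LinearMap.range A).topologicalClosure
  have hAM : ∀ x, A x ∈ M := fun x => Submodule.le_topologicalClosure _ (mem_range_self A x)
  set e : E →ₗ[𝕜] M := A.codRestrict M hAM
  have he : DenseRange e := A.denseRange_codRestrict_topologicalClosure_range hAM
  have hB : ∀ x, ‖B x‖ ≤ 1 * ‖e x‖ := fun x => (one_mul ‖A x‖).symm ▸ h x
  refine ⟨B.extendOfNorm e ∘L M.orthogonalProjectionOnto, ?_, ?_⟩
  · ext x
    have hproj : M.orthogonalProjectionOnto (A x) = e x :=
      M.orthogonalProjectionOnto_mem_subspace_eq_self (e x)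
    change B.extendOfNorm e (M.orthogonalProjectionOnto (A x)) = B x
    rw [hproj]
    exact extendOfNorm_eq he ⟨1, hB⟩ x
  · calc ‖B.extendOfNorm e ∘L M.orthogonalProjectionOnto‖
        ≤ ‖B.extendOfNorm e‖ * ‖M.orthogonalProjectionOnto‖ := opNorm_comp_le _ _
      _ ≤ 1 * 1 := mul_le_mul (opNorm_extendOfNorm_le he zero_le_one hB)
          M.orthogonalProjectionOnto_norm_le (norm_nonneg _) zero_le_one
      _ = 1 := one_mul 1

/-- **Douglas lemma (adjoint form).** Given Hilbert space operators
`A : Z → Y` and `B : Z → X`, there exists `T : Y → X` with `T A = B` and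
`‖T‖ ≤ 1` if and only if `B*B ≼ A*A`, i.e. `A*A − B*B` is a positive
operator. -/
theorem douglas_lemma_adjoint
    (X Y Z : Type*)
    [NormedAddCommGroup X] [InnerProductSpace ℂ X] [CompleteSpace X]
    [NormedAddCommGroup Y] [InnerProductSpace ℂ Y] [CompleteSpace Y]
    [NormedAddCommGroup Z] [InnerProductSpace ℂ Z] [CompleteSpace Z]
    (A : Z →L[ℂ] Y) (B : Z →L[ℂ] X) :
    (∃ T : Y →L[ℂ] X, T ∘L A = B ∧ ‖T‖ ≤ 1) ↔
      (ContinuousLinearMap.adjoint A ∘L A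
        - ContinuousLinearMap.adjoint B ∘L B).IsPositive := by
  rw [isPositive_adjoint_comp_self_sub_iff]
  constructor
  · rintro ⟨T, rfl, hT⟩ z
    calc ‖T (A z)‖ ≤ ‖T‖ * ‖A z‖ := T.le_opNorm _
      _ ≤ ‖A z‖ := mul_le_of_le_one_left (norm_nonneg _) hT
  · intro h
    obtain ⟨T, hTA, hT⟩ := LinearMap.exists_comp_eq_of_norm_apply_le (A := (A : Z →ₗ[ℂ] Y)) h
    exact ⟨T, ContinuousLinearMap.coe_injective hTA, hT⟩
end

section
/- Let M° : H_S° → H_R° be a linear map between finite-dimensional Hilbert spaces decomposed as H_S° = ⊕_p H_{S,p}°, H_R° = ⊕_p H_{R,p}° over a finite set P, and define φ_p(h) = tr((M°* P_{R,p} M° − P_{S,p}) h h*) on C₂(H_S°). If there is a unit Hilbert-Schmidt operator h with φ_p(h) ≥ 0 for every p, then there exists a block-diagonal contraction Δ = diag_p Δ_p, with Δ_p a contraction from C₂(H_S°, H_{R,p}°) to C₂(H_S°, H_{S,p}°), such that Δ(L_{M°} h) = (P_{S,p} h)_p, i.e. (I − Δ L_{M°}) h = 0; hence I − Δ L_{M°}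 is not invertible. -/
/-!
Writing `v_p` and `w_p` for the `p`-th blocks of `M° h` and of `h`, one has
`φ_p(h) = ‖v_p‖₂² - ‖w_p‖₂²` by cyclicity of the trace, so `φ_p(h) ≥ 0` says `‖w_p‖ ≤ ‖v_p‖`.
The rank-one map `x ↦ ⟪v_p, x⟫ / ‖v_p‖² • w_p` is then a contraction sending `v_p` to `w_p`.
With these `Δ_p`, `I - Δ L_{M°}` kills `h`, which is nonzero because `tr (h* h) = 1`.
-/

open Matrix

section

variable {𝕜 : Type*} [RCLike 𝕜]

theorem exists_norm_le_one_apply_eq_of_norm_le {E F : Type*}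
    [NormedAddCommGroup E] [InnerProductSpace 𝕜 E] [NormedAddCommGroup F] [NormedSpace 𝕜 F]
    {v : E} {w : F} (hwv : ‖w‖ ≤ ‖v‖) : ∃ T : E →L[𝕜] F, ‖T‖ ≤ 1 ∧ T v = w := by
  rcases eq_or_ne v 0 with rfl | hv
  · exact ⟨0, by simp, by simpa [eq_comm] using hwv⟩
  have hv' : (‖v‖ : 𝕜) ^ 2 ≠ 0 := by simpa using hv
  refine ⟨(innerSL 𝕜 v).smulRight (((‖v‖ : 𝕜) ^ 2)⁻¹ • w), ?_, ?_⟩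
  · calc ‖(innerSL 𝕜 v).smulRight (((‖v‖ : 𝕜) ^ 2)⁻¹ • w)‖ = ‖w‖ / ‖v‖ := by
          rw [ContinuousLinearMap.norm_smulRight_apply, innerSL_apply_norm, norm_smul, norm_inv,
            norm_pow, RCLike.norm_ofReal, abs_norm]
          field_simp
      _ ≤ 1 := (div_le_one (norm_pos_iff.mpr hv)).mpr hwv
  · simp [inner_self_eq_norm_sq_to_K, smul_smul, hv']

variable {P : Type*} [Fintype P] [DecidableEq P] {n : Type*} [Fintype n]

def blockProj (R : Type*) [Zero R] [One R] (d : P → ℕ) (p : P) :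
    Matrix (Σ q : P, Fin (d q)) (Σ q : P, Fin (d q)) R :=
  diagonal fun i => if i.1 = p then 1 else 0

/-- The block `P_{S,p} N`, viewed as a vector of `C₂` with its Hilbert–Schmidt norm. -/
def rowBlock {d : P → ℕ} (p : P) (N : Matrix (Σ q : P, Fin (d q)) n 𝕜) :
    EuclideanSpace 𝕜 (Fin (d p) × n) :=
  WithLp.toLp 2 fun x => N ⟨p, x.1⟩ x.2

theorem re_trace_blockProj_mul_self_mul_conjTranspose {d : P → ℕ} (p : P)
    (N : Matrix (Σ q : P, Fin (d q)) n 𝕜) :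
    RCLike.re (blockProj 𝕜 d p * (N * Nᴴ)).trace = ‖rowBlock p N‖ ^ 2 := by
  have hdiag : ∀ i, (N * Nᴴ) i i = ∑ j, (‖N i j‖ : 𝕜) ^ 2 := fun i => by
    simp [mul_apply, RCLike.mul_conj]
  rw [EuclideanSpace.norm_sq_eq, Fintype.sum_prod_type, trace]
  simp only [blockProj, diag, diagonal_mul, hdiag, ← Finset.univ_sigma_univ, Finset.sum_sigma]
  simp [rowBlock]

theorem norm_rowBlock_le_of_re_trace_nonneg {dS dR : P → ℕ} (p : P)
    (M : Matrix (Σ q : P, Fin (dR q)) (Σ q : P, Fin (dS q)) 𝕜)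
    (h : Matrix (Σ q : P, Fin (dS q)) n 𝕜)
    (hφ : 0 ≤ RCLike.re ((Mᴴ * blockProj 𝕜 dR p * M - blockProj 𝕜 dS p) * (h * hᴴ)).trace) :
    ‖rowBlock p h‖ ≤ ‖rowBlock p (M * h)‖ := by
  have hcyc : (Mᴴ * blockProj 𝕜 dR p * M * (h * hᴴ)).trace
      = (blockProj 𝕜 dR p * ((M * h) * (M * h)ᴴ)).trace := by
    rw [Matrix.mul_assoc, Matrix.mul_assoc, trace_mul_comm]
    simp only [conjTranspose_mul, Matrix.mul_assoc]
  rw [sub_mul, trace_sub, map_sub, hcyc, re_trace_blockProj_mul_self_mul_conjTranspose,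
    re_trace_blockProj_mul_self_mul_conjTranspose, sub_nonneg] at hφ
  exact pow_le_pow_iff_left₀ (norm_nonneg _) (norm_nonneg _) two_ne_zero |>.mp hφ

end

/-- If some unit Hilbert–Schmidt operator `h` satisfies `φ_p(h) ≥ 0` for every
`p`, then there is a block-diagonal contraction `Δ = diag_p Δ_p` — each `Δ_p` a
contraction from `C₂(H_S°, H_{R,p}°)` to `C₂(H_S°, H_{S,p}°)` (realized as
Euclidean spaces of matrix blocks) — with `Δ(L_{M°} h) = (P_{S,p} h)_p`, i.e.
`(I − Δ L_{M°}) h = 0`; hence `I − Δ L_{M°}` is not invertible. -/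
theorem nonneg_phi_gives_noninvertible
    {P : Type*} [Fintype P] [DecidableEq P] (dS dR : P → ℕ)
    (M : Matrix (Σ p : P, Fin (dR p)) (Σ p : P, Fin (dS p)) ℂ)
    (h : Matrix (Σ p : P, Fin (dS p)) (Σ p : P, Fin (dS p)) ℂ)
    (hnorm : (hᴴ * h).trace = 1)
    (hphi : ∀ p : P, 0 ≤
      ((Mᴴ * Matrix.diagonal (fun i : Σ p : P, Fin (dR p) => if i.1 = p then (1:ℂ) else 0) * M
        - Matrix.diagonal (fun i : Σ p : P, Fin (dS p) => if i.1 = p then (1:ℂ) else 0))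
        * (h * hᴴ)).trace.re) :
    ∃ Δ : ∀ p : P, EuclideanSpace ℂ (Fin (dR p) × (Σ p : P, Fin (dS p))) →L[ℂ]
        EuclideanSpace ℂ (Fin (dS p) × (Σ p : P, Fin (dS p))),
      (∀ p, ‖Δ p‖ ≤ 1) ∧
      (∀ (p : P) (y : Fin (dS p) × (Σ p : P, Fin (dS p))),
        Δ p (WithLp.toLp 2 (fun x => (M * h) ⟨p, x.1⟩ x.2)) y = h ⟨p, y.1⟩ y.2) ∧
      ¬ Function.Injective
        (fun (g : Matrix (Σ p : P, Fin (dS p)) (Σ p : P, Fin (dS p)) ℂ) =>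
          (fun (y : Σ p : P, Fin (dS p)) (j : Σ p : P, Fin (dS p)) =>
            g y j - Δ y.1 (WithLp.toLp 2 (fun x => (M * g) ⟨y.1, x.1⟩ x.2)) (y.2, j)
            : Matrix (Σ p : P, Fin (dS p)) (Σ p : P, Fin (dS p)) ℂ)) := by
  have hle (p : P) : ‖rowBlock p h‖ ≤ ‖rowBlock p (M * h)‖ :=
    norm_rowBlock_le_of_re_trace_nonneg p M h (hphi p)
  choose Δ hΔ hΔh using fun p => exists_norm_le_one_apply_eq_of_norm_le (𝕜 := ℂ) (hle p)
  have hfix (p : P) (y : Fin (dS p) × (Σ p : P, Fin (dS p))) :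
      Δ p (WithLp.toLp 2 (fun x => (M * h) ⟨p, x.1⟩ x.2)) y = h ⟨p, y.1⟩ y.2 :=
    congrArg (· y) (hΔh p)
  refine ⟨Δ, hΔ, hfix, fun hinj => ?_⟩
  have h0 : h = 0 := hinj <| funext fun y => funext fun j => by
    simp [hfix, ← Pi.zero_def]
  simp [h0] at hnorm
end

section
/- Let H_S be a Hilbert space, V_S an isometry on H_S with V_S^{*n} → 0 strongly, and φ_p : H_S → V quadratic forms (into a normed space V) satisfying the shift invariance φ_p(V_S h) = φ_p(h) and such that the sesquilinear cross terms satisfy: for fixed h, h̃, the cross term of φ_p evaluated at h and V_S^n h̃ tends to 0 as n → ∞. Then for unit vectors h, h̃ and 0 < α < 1, setting h_n = √α h + √(1−α) V_S^n h̃, one has ‖h_n‖ → 1 and φ_p(h_n/‖h_n‖) → α φ_p(h) + (1−α) φ_p(h̃); hence the closure of {(φ_p(h))_p : ‖h‖ = 1} is convex. -/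
/-!
Since `V` is an isometry with `V*ⁿ → 0` strongly, `Vⁿ y` becomes asymptotically orthogonal to
`x`, so `hₙ = √α x + √(1 - α) Vⁿ y` has norm tending to `1`. Shift invariance gives
`B (Vⁿ y) (Vⁿ y) = B y y` and the cross terms vanish, so `B hₙ hₙ → α B x x + (1 - α) B y y`.
Hence every point of an open segment between two points of the joint numerical range is a limit
of points of the range, which makes its closure convex.
-/

open Filter Topology

theorem tendsto_inner_apply_of_tendsto_adjoint_apply {𝕜 E G : Type*} [RCLike 𝕜]
    [NormedAddCommGroup E] [InnerProductSpace 𝕜 E] [CompleteSpace E]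
    [NormedAddCommGroup G] [InnerProductSpace 𝕜 G] [CompleteSpace G]
    {ι : Type*} {l : Filter ι} {T : ι → E →L[𝕜] G}
    (hT : ∀ x : G, Tendsto (fun i => ContinuousLinearMap.adjoint (T i) x) l (𝓝 0)) (x : G) (y : E) :
    Tendsto (fun i => inner 𝕜 x (T i y)) l (𝓝 0) := by
  simpa only [ContinuousLinearMap.adjoint_inner_left, inner_zero_left] using
    (hT x).inner (𝕜 := 𝕜) (tendsto_const_nhds (x := y))

theorem norm_pow_apply_of_forall_norm_map {𝕜 E : Type*} [NormedField 𝕜]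
    [SeminormedAddCommGroup E] [NormedSpace 𝕜 E] {V : E →L[𝕜] E} (hV : ∀ x, ‖V x‖ = ‖x‖)
    (n : ℕ) (x : E) : ‖(V ^ n) x‖ = ‖x‖ := by
  induction n generalizing x with
  | zero => rfl
  | succ n ih => rw [pow_succ, mul_apply_eq_comp, ih, hV]

theorem LinearMap.apply_pow_apply_pow_of_invariant {R S M P : Type*} [CommSemiring R]
    [CommSemiring S] [AddCommMonoid M] [TopologicalSpace M] [Module R M] [AddCommMonoid P]
    [Module R P] [Module S P] [SMulCommClass R S P] {σ : R →+* S} (B : M →ₛₗ[σ] M →ₗ[R] P)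
    {V : M →L[R] M} (hB : ∀ x y, B (V x) (V y) = B x y) (n : ℕ) (x y : M) :
    B ((V ^ n) x) ((V ^ n) y) = B x y := by
  induction n generalizing x y with
  | zero => rfl
  | succ n ih => rw [pow_succ, mul_apply_eq_comp, mul_apply_eq_comp, ih, hB]

theorem LinearMap.apply_smul_smul_self {R M P : Type*} [CommSemiring R] [AddCommMonoid M]
    [Module R M] [AddCommMonoid P] [Module R P] {σ : R →+* R} (B : M →ₛₗ[σ] M →ₗ[R] P) (c : R)
    (x : M) : B (c • x) (c • x) = (σ c * c) • B x x := by
  rw [LinearMap.map_smulₛₗ₂, map_smul, smul_smul]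

theorem tendsto_apply_inv_norm_smul {E F : Type*} [SeminormedAddCommGroup E] [NormedSpace ℂ E]
    [NormedAddCommGroup F] [NormedSpace ℂ F] (B : E →ₗ⋆[ℂ] E →ₗ[ℂ] F) {ι : Type*}
    {l : Filter ι} {u : ι → E} {L : F} (hu : Tendsto (fun i => ‖u i‖) l (𝓝 1))
    (hB : Tendsto (fun i => B (u i) (u i)) l (𝓝 L)) :
    Tendsto (fun i => B ((‖u i‖ : ℂ)⁻¹ • u i) ((‖u i‖ : ℂ)⁻¹ • u i)) l (𝓝 L) := by
  have hinv : Tendsto (fun i => (‖u i‖ : ℂ)⁻¹) l (𝓝 1) := by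
    simpa using ((Complex.continuous_ofReal.tendsto 1).comp hu).inv₀ one_ne_zero
  simpa only [LinearMap.apply_smul_smul_self, map_inv₀, Complex.conj_ofReal, mul_one,
    one_smul] using (hinv.mul hinv).smul hB

theorem convex_closure_of_openSegment_subset_closure {𝕜 E : Type*} [Semiring 𝕜]
    [PartialOrder 𝕜] [ZeroLEOneClass 𝕜] [AddCommMonoid E] [Module 𝕜 E] [TopologicalSpace E]
    [ContinuousAdd E] [ContinuousConstSMul 𝕜 E] {s : Set E}
    (hs : ∀ x ∈ s, ∀ y ∈ s, openSegment 𝕜 x y ⊆ closure s) : Convex 𝕜 (closure s) := by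
  refine convex_iff_segment_subset.2 fun x hx y hy => ?_
  rw [← insert_endpoints_openSegment]
  refine Set.insert_subset hx (Set.insert_subset hy ?_)
  rintro _ ⟨a, b, ha, hb, hab, rfl⟩
  have hmaps : Set.MapsTo (fun q : E × E => a • q.1 + b • q.2) (s ×ˢ s) (closure s) :=
    fun q hq => hs _ hq.1 _ hq.2 ⟨a, b, ha, hb, hab, rfl⟩
  have hxy : (x, y) ∈ closure (s ×ˢ s) := by rw [closure_prod_eq]; exact ⟨hx, hy⟩
  simpa only [closure_closure] using map_mem_closure (by fun_prop) hxy hmaps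

section ShiftTrick

variable {H F : Type*} [NormedAddCommGroup H] [InnerProductSpace ℂ H]
  [NormedAddCommGroup F] [NormedSpace ℂ F] {V : H →L[ℂ] H} {α : ℝ} {x y : H}

noncomputable def shiftedCombination (V : H →L[ℂ] H) (α : ℝ) (x y : H) (n : ℕ) : H :=
  (Real.sqrt α : ℂ) • x + (Real.sqrt (1 - α) : ℂ) • (V ^ n) y

theorem norm_shiftedCombination_sq (hV : ∀ x, ‖V x‖ = ‖x‖) (hx : ‖x‖ = 1) (hy : ‖y‖ = 1)
    (hα₀ : 0 ≤ α) (hα₁ : α ≤ 1) (n : ℕ) :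
    ‖shiftedCombination V α x y n‖ ^ 2 =
      1 + 2 * (Real.sqrt α * Real.sqrt (1 - α)) * (inner ℂ x ((V ^ n) y)).re := by
  rw [shiftedCombination, norm_add_sq (𝕜 := ℂ), inner_smul_left, inner_smul_right, norm_smul,
    norm_smul, norm_pow_apply_of_forall_norm_map hV, hx, hy, Complex.norm_real,
    Complex.norm_real, Complex.conj_ofReal, RCLike.re_to_complex, ← mul_assoc,
    ← Complex.ofReal_mul, Complex.re_ofReal_mul, Real.norm_of_nonneg (Real.sqrt_nonneg _),
    Real.norm_of_nonneg (Real.sqrt_nonneg _), mul_one, mul_one,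
    Real.sq_sqrt hα₀, Real.sq_sqrt (sub_nonneg.2 hα₁)]
  ring

theorem apply_shiftedCombination_self (B : H →ₗ⋆[ℂ] H →ₗ[ℂ] F)
    (hB : ∀ x y, B (V x) (V y) = B x y) (hα₀ : 0 ≤ α) (hα₁ : α ≤ 1) (n : ℕ) :
    B (shiftedCombination V α x y n) (shiftedCombination V α x y n) =
      (α : ℂ) • B x x + ((1 - α : ℝ) : ℂ) • B y y +
        ((Real.sqrt α * Real.sqrt (1 - α) : ℝ) : ℂ) • (B x ((V ^ n) y) + B ((V ^ n) y) x) := by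
  have hsqrt : ∀ {t : ℝ}, 0 ≤ t → (Real.sqrt t : ℂ) * Real.sqrt t = t := fun ht => by
    rw [← Complex.ofReal_mul, Real.mul_self_sqrt ht]
  simp only [shiftedCombination, map_add, LinearMap.add_apply, LinearMap.map_smulₛₗ₂, map_smul,
    Complex.conj_ofReal, smul_smul, smul_add, LinearMap.apply_pow_apply_pow_of_invariant B hB,
    hsqrt hα₀, hsqrt (sub_nonneg.2 hα₁), Complex.ofReal_mul, Complex.ofReal_sub,
    Complex.ofReal_one, mul_comm (Real.sqrt (1 - α) : ℂ)]
  abel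

theorem tendsto_apply_shiftedCombination_self (B : H →ₗ⋆[ℂ] H →ₗ[ℂ] F)
    (hB : ∀ x y, B (V x) (V y) = B x y)
    (hcross : Tendsto (fun n => B x ((V ^ n) y) + B ((V ^ n) y) x) atTop (𝓝 0))
    (hα₀ : 0 ≤ α) (hα₁ : α ≤ 1) :
    Tendsto (fun n => B (shiftedCombination V α x y n) (shiftedCombination V α x y n)) atTop
      (𝓝 ((α : ℂ) • B x x + ((1 - α : ℝ) : ℂ) • B y y)) := by
  simpa only [apply_shiftedCombination_self B hB hα₀ hα₁, smul_zero, add_zero] using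
    tendsto_const_nhds.add
      (hcross.const_smul ((Real.sqrt α * Real.sqrt (1 - α) : ℝ) : ℂ))

variable [CompleteSpace H]

theorem tendsto_norm_shiftedCombination (hV : ∀ x, ‖V x‖ = ‖x‖)
    (hadj : ∀ x : H, Tendsto (fun n => ContinuousLinearMap.adjoint (V ^ n) x) atTop (𝓝 0))
    (hx : ‖x‖ = 1) (hy : ‖y‖ = 1) (hα₀ : 0 ≤ α) (hα₁ : α ≤ 1) :
    Tendsto (fun n => ‖shiftedCombination V α x y n‖) atTop (𝓝 1) := by
  have hre : Tendsto (fun n => (inner ℂ x ((V ^ n) y)).re) atTop (𝓝 0) :=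
    (Complex.continuous_re.tendsto 0).comp (tendsto_inner_apply_of_tendsto_adjoint_apply hadj x y)
  have hsq : Tendsto (fun n => ‖shiftedCombination V α x y n‖ ^ 2) atTop (𝓝 1) := by
    simpa only [norm_shiftedCombination_sq hV hx hy hα₀ hα₁, mul_zero, add_zero] using
      (hre.const_mul (2 * (Real.sqrt α * Real.sqrt (1 - α)))).const_add 1
  simpa only [Real.sqrt_sq (norm_nonneg _), Real.sqrt_one] using hsq.sqrt

theorem tendsto_apply_normalized_shiftedCombination (B : H →ₗ⋆[ℂ] H →ₗ[ℂ] F)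
    (hV : ∀ x, ‖V x‖ = ‖x‖)
    (hadj : ∀ x : H, Tendsto (fun n => ContinuousLinearMap.adjoint (V ^ n) x) atTop (𝓝 0))
    (hB : ∀ x y, B (V x) (V y) = B x y)
    (hcross : Tendsto (fun n => B x ((V ^ n) y) + B ((V ^ n) y) x) atTop (𝓝 0))
    (hx : ‖x‖ = 1) (hy : ‖y‖ = 1) (hα₀ : 0 ≤ α) (hα₁ : α ≤ 1) :
    Tendsto (fun n => B ((‖shiftedCombination V α x y n‖ : ℂ)⁻¹ • shiftedCombination V α x y n)
        ((‖shiftedCombination V α x y n‖ : ℂ)⁻¹ • shiftedCombination V α x y n)) atTop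
      (𝓝 ((α : ℂ) • B x x + ((1 - α : ℝ) : ℂ) • B y y)) :=
  tendsto_apply_inv_norm_smul B (tendsto_norm_shiftedCombination hV hadj hx hy hα₀ hα₁)
    (tendsto_apply_shiftedCombination_self B hB hcross hα₀ hα₁)

def jointNumericalRange {P : Type*} (B : P → H →ₗ⋆[ℂ] H →ₗ[ℂ] F) : Set (P → F) :=
  {v | ∃ x : H, ‖x‖ = 1 ∧ ∀ p, v p = B p x x}

theorem openSegment_subset_closure_jointNumericalRange [NormedSpace ℝ F] [IsScalarTower ℝ ℂ F]
    {P : Type*} {B : P → H →ₗ⋆[ℂ] H →ₗ[ℂ] F} (hV : ∀ x, ‖V x‖ = ‖x‖)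
    (hadj : ∀ x : H, Tendsto (fun n => ContinuousLinearMap.adjoint (V ^ n) x) atTop (𝓝 0))
    (hB : ∀ p x y, B p (V x) (V y) = B p x y)
    (hcross : ∀ p x y, Tendsto (fun n => B p x ((V ^ n) y) + B p ((V ^ n) y) x) atTop (𝓝 0))
    {v w : P → F} (hv : v ∈ jointNumericalRange B) (hw : w ∈ jointNumericalRange B) :
    openSegment ℝ v w ⊆ closure (jointNumericalRange B) := by
  obtain ⟨x, hx, hvx⟩ := hv
  obtain ⟨y, hy, hwy⟩ := hw
  rintro _ ⟨a, b, ha, hb, hab, rfl⟩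
  obtain rfl : b = 1 - a := by linarith
  have ha₁ : a ≤ 1 := by linarith
  let h := shiftedCombination V a x y
  have hlim : Tendsto (fun n p => B p ((‖h n‖ : ℂ)⁻¹ • h n) ((‖h n‖ : ℂ)⁻¹ • h n)) atTop
      (𝓝 (a • v + (1 - a) • w)) := by
    refine tendsto_pi_nhds.2 fun p => ?_
    simp only [Pi.add_apply, Pi.smul_apply, hvx p, hwy p, RCLike.real_smul_eq_coe_smul (K := ℂ)]
    exact tendsto_apply_normalized_shiftedCombination (B p) hV hadj (hB p) (hcross p x y) hx hy
      ha.le ha₁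
  refine mem_closure_of_tendsto hlim ?_
  have hnorm := tendsto_norm_shiftedCombination hV hadj hx hy ha.le ha₁
  filter_upwards [hnorm.eventually (eventually_gt_nhds zero_lt_one)] with n hn
  exact ⟨_, norm_smul_inv_norm (norm_pos_iff.1 hn), fun p => rfl⟩

end ShiftTrick

theorem closure_nabla_convex_general
    {H : Type*} [NormedAddCommGroup H] [InnerProductSpace ℂ H] [CompleteSpace H]
    {P : Type*}
    {F : Type*} [NormedAddCommGroup F] [NormedSpace ℂ F] [NormedSpace ℝ F]
    [IsScalarTower ℝ ℂ F]
    (V : H →L[ℂ] H) (hiso : ∀ x, ‖V x‖ = ‖x‖)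
    (hadj : ∀ x : H, Tendsto (fun n => ContinuousLinearMap.adjoint (V ^ n) x) atTop (𝓝 0))
    (B : P → (H →ₗ⋆[ℂ] (H →ₗ[ℂ] F)))
    (hshift : ∀ p (x y : H), B p (V x) (V y) = B p x y)
    (hcross : ∀ p (x y : H),
      Tendsto (fun n => B p x ((V ^ n) y) + B p ((V ^ n) y) x) atTop (𝓝 0)) :
    (∀ (p₀ : P) (x y : H), ‖x‖ = 1 → ‖y‖ = 1 → ∀ α : ℝ, 0 < α → α < 1 →
      (Tendsto (fun n =>
          ‖(Real.sqrt α : ℂ) • x + (Real.sqrt (1 - α) : ℂ) • ((V ^ n) y)‖) atTop (𝓝 1)) ∧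
      Tendsto (fun n =>
          B p₀ ((‖(Real.sqrt α : ℂ) • x + (Real.sqrt (1 - α) : ℂ) • ((V ^ n) y)‖ : ℂ)⁻¹ •
              ((Real.sqrt α : ℂ) • x + (Real.sqrt (1 - α) : ℂ) • ((V ^ n) y)))
            ((‖(Real.sqrt α : ℂ) • x + (Real.sqrt (1 - α) : ℂ) • ((V ^ n) y)‖ : ℂ)⁻¹ •
              ((Real.sqrt α : ℂ) • x + (Real.sqrt (1 - α) : ℂ) • ((V ^ n) y))))
        atTop (𝓝 ((α : ℂ) • B p₀ x x + ((1 - α : ℝ) : ℂ) • B p₀ y y))) ∧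
    Convex ℝ (closure {v : P → F | ∃ x : H, ‖x‖ = 1 ∧ ∀ p, v p = B p x x}) :=
  ⟨fun p₀ _ _ hx hy _ hα₀ hα₁ =>
    ⟨tendsto_norm_shiftedCombination hiso hadj hx hy hα₀.le hα₁.le,
      tendsto_apply_normalized_shiftedCombination (B p₀) hiso hadj (hshift p₀) (hcross p₀ _ _)
        hx hy hα₀.le hα₁.le⟩,
    convex_closure_of_openSegment_subset_closure fun _ hv _ hw =>
      openSegment_subset_closure_jointNumericalRange hiso hadj hshift hcross hv hw⟩

/-- **Convexity of the closure of `∇` via the shift trick** (Megretski–Treil).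
Let `V_S` be an isometry on a Hilbert space `H_S` with `V_S*ⁿ → 0` strongly, and
let `φ_p(h) = B_p(h,h)` for sesquilinear forms `B_p` (valued in a
finite-dimensional normed space) which are shift invariant and whose cross
terms vanish asymptotically along the shift.  Then for unit vectors `h, h̃` and
`0 < α < 1`, with `h_n = √α h + √(1−α) V_Sⁿ h̃`, one has `‖h_n‖ → 1` and
`φ_p(h_n/‖h_n‖) → α φ_p(h) + (1−α) φ_p(h̃)`; hence the closure of
`{(φ_p(h))_p : ‖h‖ = 1}` is convex. -/
theorem closure_nabla_convex
    {H : Type*} [NormedAddCommGroup H] [InnerProductSpace ℂ H] [CompleteSpace H]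
    {P : Type*} [Fintype P]
    {F : Type*} [NormedAddCommGroup F] [NormedSpace ℂ F] [NormedSpace ℝ F]
    [IsScalarTower ℝ ℂ F] [FiniteDimensional ℂ F]
    (V : H →L[ℂ] H) (hiso : ∀ x, ‖V x‖ = ‖x‖)
    (hadj : ∀ x : H, Tendsto (fun n => ContinuousLinearMap.adjoint (V ^ n) x) atTop (𝓝 0))
    (B : P → (H →ₗ⋆[ℂ] (H →ₗ[ℂ] F)))
    (hshift : ∀ p (x y : H), B p (V x) (V y) = B p x y)
    (hcross : ∀ p (x y : H),
      Tendsto (fun n => B p x ((V ^ n) y) + B p ((V ^ n) y) x) atTop (𝓝 0)) :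
    (∀ (p₀ : P) (x y : H), ‖x‖ = 1 → ‖y‖ = 1 → ∀ α : ℝ, 0 < α → α < 1 →
      (Tendsto (fun n =>
          ‖(Real.sqrt α : ℂ) • x + (Real.sqrt (1 - α) : ℂ) • ((V ^ n) y)‖) atTop (𝓝 1)) ∧
      Tendsto (fun n =>
          B p₀ ((‖(Real.sqrt α : ℂ) • x + (Real.sqrt (1 - α) : ℂ) • ((V ^ n) y)‖ : ℂ)⁻¹ •
              ((Real.sqrt α : ℂ) • x + (Real.sqrt (1 - α) : ℂ) • ((V ^ n) y)))
            ((‖(Real.sqrt α : ℂ) • x + (Real.sqrt (1 - α) : ℂ) • ((V ^ n) y)‖ : ℂ)⁻¹ •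
              ((Real.sqrt α : ℂ) • x + (Real.sqrt (1 - α) : ℂ) • ((V ^ n) y))))
        atTop (𝓝 ((α : ℂ) • B p₀ x x + ((1 - α : ℝ) : ℂ) • B p₀ y y))) ∧
    Convex ℝ (closure {v : P → F | ∃ x : H, ‖x‖ = 1 ∧ ∀ p, v p = B p x x}) :=
  closure_nabla_convex_general V hiso hadj B hshift hcross
end

section
/- Let A be a square complex matrix, and suppose there exists a positive definite matrix X and operators such that the LMI [A* C*; B* D*] diag(X, Γ_R) [A B; C D] − diag(X, Γ_S) ≺ 0 holds, where Γ_R = ⊕_p (I ⊗ Γ_p°) and Γ_S = ⊕_p (I ⊗ Γ_p°) with Γ_p° ≻ 0. Then for the transfer function M̂(λ) = D + λ C (I − λA)⁻¹ B one has sup_{|λ|<1} ‖Γ_R^{1/2} M̂(λ) Γ_S^{−1/2}‖ < 1. In particular, taking Γ_R = Γ_S = I: if [A* C*; B* D*] diag(X, I) [A B; C D] − diag(X, I) ≺ 0 with X ≻ 0, then A has spectral radius less than 1 and sup_{|λ|<1} ‖D + λC(I−λA)⁻¹B‖ < 1. -/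
/-!
Negative definiteness of the LMI yields some `ε > 0` with the strict dissipation inequality
`V(Ax + Bu) + ‖Γ_R^{1/2}(Cx + Du)‖² + ε (‖x‖² + ‖u‖²) ≤ V(x) + ‖Γ_S^{1/2}u‖²` for the storage
`V(x) = x*Xx`. With `u = 0` it is a strict Stein inequality, which puts every eigenvalue of `A`
in the open unit disk, so `I − λA` is invertible for `|λ| < 1`. The state
`x = λ(I − λA)⁻¹Bu` satisfies `x = λ(Ax + Bu)`, hence `V(x) ≤ V(Ax + Bu)`, and the output
`M̂(λ)u = Cx + Du` obeys `‖Γ_R^{1/2}M̂(λ)u‖² + ε‖u‖² ≤ ‖Γ_S^{1/2}u‖²`. Since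
`‖Γ_S^{1/2}u‖ ≤ ‖Γ_S^{1/2}‖‖u‖`, this bounds `‖Γ_R^{1/2}M̂(λ)Γ_S^{−1/2}‖²` by
`1 − ε / (‖Γ_S^{1/2}‖² + ε)`, uniformly in `λ`.
-/

open Matrix
open scoped Kronecker ComplexOrder

/-- The operator norm of a (rectangular) matrix viewed as an operator between
Euclidean spaces. -/
noncomputable def euclideanOpNorm {a b : Type*} [Fintype a] [Fintype b] [DecidableEq b]
    (T : Matrix a b ℂ) : ℝ :=
  ‖LinearMap.toContinuousLinearMap (Matrix.toEuclideanLin T)‖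

open WithLp
open scoped Matrix.Norms.L2Operator MatrixOrder

lemma isUnit_one_sub_smul_of_norm_le_one {𝕜 R : Type*} [NormedField 𝕜] [Ring R] [Algebra 𝕜 R]
    {a : R} (ha : ∀ z ∈ spectrum 𝕜 a, ‖z‖ < 1) {t : 𝕜} (ht : ‖t‖ ≤ 1) : IsUnit (1 - t • a) := by
  rcases eq_or_ne t 0 with rfl | ht0
  · simp
  have hnot : t⁻¹ ∉ spectrum 𝕜 a := fun h => by
    have := ha _ h
    rw [norm_inv] at this
    exact (one_le_inv₀ (norm_pos_iff.mpr ht0)).mpr ht |>.not_gt this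
  rw [spectrum.notMem_iff, Algebra.algebraMap_eq_smul_one] at hnot
  have hunit := (IsUnit.smul_sub_iff_sub_inv_smul (Units.mk0 t ht0)⁻¹ a).mp
    (by simpa [Units.smul_def] using hnot)
  simpa [Units.smul_def] using hunit

namespace Matrix

section QuadForm

variable {m n : Type*} [Fintype m] [Fintype n]

noncomputable def quadForm (M : Matrix n n ℂ) (v : n → ℂ) : ℝ := (star v ⬝ᵥ M *ᵥ v).re

lemma quadForm_neg (M : Matrix n n ℂ) (v : n → ℂ) : quadForm (-M) v = -quadForm M v := by
  simp [quadForm, neg_mulVec]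

lemma quadForm_sub (M N : Matrix n n ℂ) (v : n → ℂ) :
    quadForm (M - N) v = quadForm M v - quadForm N v := by
  simp [quadForm, sub_mulVec, dotProduct_sub]

lemma quadForm_smul (M : Matrix n n ℂ) (z : ℂ) (v : n → ℂ) :
    quadForm M (z • v) = ‖z‖ ^ 2 * quadForm M v := by
  rw [quadForm, quadForm, star_smul, mulVec_smul, dotProduct_smul, smul_dotProduct, smul_smul,
    Complex.star_def, Complex.mul_conj', smul_eq_mul, ← Complex.ofReal_pow, Complex.re_ofReal_mul]

lemma quadForm_conjTranspose_mul_mul (P : Matrix m n ℂ) (Q : Matrix m m ℂ) (v : n → ℂ) :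
    quadForm (Pᴴ * Q * P) v = quadForm Q (P *ᵥ v) := by
  rw [quadForm, quadForm, ← mulVec_mulVec, ← mulVec_mulVec, dotProduct_mulVec, ← star_mulVec]

lemma quadForm_one [DecidableEq n] (v : n → ℂ) : quadForm 1 v = ‖toLp 2 v‖ ^ 2 := by
  rw [EuclideanSpace.norm_sq_eq]
  simp [quadForm, dotProduct, Complex.re_sum, ← Complex.normSq_eq_norm_sq, Complex.normSq_apply]

lemma quadForm_algebraMap [DecidableEq n] (r : ℝ) (v : n → ℂ) :
    quadForm (algebraMap ℝ (Matrix n n ℂ) r) v = r * ‖toLp 2 v‖ ^ 2 := by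
  rw [Algebra.algebraMap_eq_smul_one, ← quadForm_one]
  simp [quadForm, smul_mulVec, dotProduct_smul]

lemma quadForm_conjTranspose_mul_self [DecidableEq n] (S : Matrix m n ℂ) (v : n → ℂ) :
    quadForm (Sᴴ * S) v = ‖toLp 2 (S *ᵥ v)‖ ^ 2 := by
  classical
  simpa [← quadForm_one] using quadForm_conjTranspose_mul_mul S 1 v

lemma IsHermitian.quadForm_mul_self [DecidableEq n] {S : Matrix n n ℂ} (hS : S.IsHermitian)
    (v : n → ℂ) : quadForm (S * S) v = ‖toLp 2 (S *ᵥ v)‖ ^ 2 := by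
  simpa only [hS.eq] using quadForm_conjTranspose_mul_self S v

lemma quadForm_fromBlocks_zero (X : Matrix n n ℂ) (G : Matrix m m ℂ) (x : n → ℂ) (u : m → ℂ) :
    quadForm (fromBlocks X 0 0 G) (Sum.elim x u) = quadForm X x + quadForm G u := by
  simp [quadForm, fromBlocks_mulVec, Function.star_sumElim]

lemma PosSemidef.quadForm_nonneg {M : Matrix n n ℂ} (hM : M.PosSemidef) (v : n → ℂ) :
    0 ≤ quadForm M v :=
  hM.re_dotProduct_nonneg v

lemma PosDef.exists_pos_mul_le_quadForm [DecidableEq n] {M : Matrix n n ℂ} (hM : M.PosDef) :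
    ∃ ε > 0, ∀ v, ε * ‖toLp 2 v‖ ^ 2 ≤ quadForm M v := by
  cases isEmpty_or_nonempty n
  · exact ⟨1, one_pos, fun v => by simp [Subsingleton.elim v 0, quadForm]⟩
  obtain ⟨i, hi⟩ := Finite.exists_min hM.1.eigenvalues
  refine ⟨_, hM.eigenvalues_pos i, fun v => ?_⟩
  have hle : algebraMap ℝ (Matrix n n ℂ) (hM.1.eigenvalues i) ≤ M := by
    refine algebraMap_le_of_le_spectrum ?_ hM.1
    rw [hM.1.spectrum_real_eq_range_eigenvalues]
    rintro _ ⟨j, rfl⟩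
    exact hi j
  have := (le_iff.mp hle).quadForm_nonneg v
  rwa [quadForm_sub, quadForm_algebraMap, sub_nonneg] at this

end QuadForm

lemma norm_lt_one_of_mulVec_eq_smul {n : Type*} [Fintype n] {A X : Matrix n n ℂ}
    (hX : X.PosSemidef) (hA : ∀ x ≠ 0, quadForm X (A *ᵥ x) < quadForm X x) {x : n → ℂ}
    (hx : x ≠ 0) {z : ℂ} (hAx : A *ᵥ x = z • x) : ‖z‖ < 1 := by
  have h := hA x hx
  rw [hAx, quadForm_smul] at h
  by_contra! hz
  nlinarith [hX.quadForm_nonneg x, one_le_pow₀ (n := 2) hz]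

lemma norm_lt_one_of_mem_spectrum {n : Type*} [Fintype n] [DecidableEq n] {A X : Matrix n n ℂ}
    (hX : X.PosSemidef) (hA : ∀ x ≠ 0, quadForm X (A *ᵥ x) < quadForm X x) :
    ∀ z ∈ spectrum ℂ A, ‖z‖ < 1 := by
  intro z hz
  rw [← spectrum_toLin', ← Module.End.hasEigenvalue_iff_mem_spectrum] at hz
  obtain ⟨x, hx⟩ := hz.exists_hasEigenvector
  exact norm_lt_one_of_mulVec_eq_smul hX hA hx.2 (by simpa using hx.apply_eq_smul)

section Dissipation

variable {n m r : Type*} [Fintype n] [Fintype m] [Fintype r]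

lemma norm_toLp_sumElim_sq (x : n → ℂ) (u : m → ℂ) :
    ‖toLp 2 (Sum.elim x u)‖ ^ 2 = ‖toLp 2 x‖ ^ 2 + ‖toLp 2 u‖ ^ 2 := by
  simp only [EuclideanSpace.norm_sq_eq, Fintype.sum_sum_type, Sum.elim_inl, Sum.elim_inr]

def IsStrictlyDissipative (A : Matrix n n ℂ) (B : Matrix n m ℂ) (C : Matrix r n ℂ)
    (D : Matrix r m ℂ) (X : Matrix n n ℂ) (GR : Matrix r r ℂ) (GS : Matrix m m ℂ) (ε : ℝ) :
    Prop :=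
  ∀ x u, quadForm X (A *ᵥ x + B *ᵥ u) + quadForm GR (C *ᵥ x + D *ᵥ u) +
    ε * (‖toLp 2 x‖ ^ 2 + ‖toLp 2 u‖ ^ 2) ≤ quadForm X x + quadForm GS u

noncomputable def transferMatrix [DecidableEq n] (A : Matrix n n ℂ) (B : Matrix n m ℂ)
    (C : Matrix r n ℂ) (D : Matrix r m ℂ) (t : ℂ) : Matrix r m ℂ :=
  D + t • (C * (1 - t • A)⁻¹ * B)

variable {A : Matrix n n ℂ} {B : Matrix n m ℂ} {C : Matrix r n ℂ} {D : Matrix r m ℂ}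
  {X : Matrix n n ℂ} {GR : Matrix r r ℂ} {GS : Matrix m m ℂ} {ε : ℝ}

lemma exists_isStrictlyDissipative [DecidableEq n] [DecidableEq m]
    (hLMI : (-(fromBlocks Aᴴ Cᴴ Bᴴ Dᴴ * fromBlocks X 0 0 GR * fromBlocks A B C D -
      fromBlocks X 0 0 GS)).PosDef) :
    ∃ ε > 0, IsStrictlyDissipative A B C D X GR GS ε := by
  obtain ⟨ε, hε, hcoer⟩ := hLMI.exists_pos_mul_le_quadForm
  refine ⟨ε, hε, fun x u => ?_⟩
  have h := hcoer (Sum.elim x u)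
  rw [norm_toLp_sumElim_sq, quadForm_neg, quadForm_sub, ← fromBlocks_conjTranspose,
    quadForm_conjTranspose_mul_mul, fromBlocks_mulVec, Sum.elim_comp_inl, Sum.elim_comp_inr,
    quadForm_fromBlocks_zero, quadForm_fromBlocks_zero] at h
  linarith

namespace IsStrictlyDissipative

lemma quadForm_mulVec_lt (hdiss : IsStrictlyDissipative A B C D X GR GS ε) (hε : 0 < ε)
    (hGR : GR.PosSemidef) {x : n → ℂ} (hx : x ≠ 0) : quadForm X (A *ᵥ x) < quadForm X x := by
  have h := hdiss x 0
  have hxpos : 0 < ‖toLp 2 x‖ := by simpa using hx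
  have h0 : quadForm GS 0 = 0 := by simp [quadForm]
  simp only [mulVec_zero, add_zero, toLp_zero, norm_zero, h0] at h
  nlinarith [hGR.quadForm_nonneg (C *ᵥ x), mul_pos hε (pow_pos hxpos 2)]

lemma quadForm_transferMatrix_mulVec_add_le [DecidableEq n]
    (hdiss : IsStrictlyDissipative A B C D X GR GS ε) (hε : 0 ≤ ε) (hX : X.PosSemidef) {t : ℂ}
    (ht : ‖t‖ ≤ 1) (hunit : IsUnit (1 - t • A)) (u : m → ℂ) :
    quadForm GR (transferMatrix A B C D t *ᵥ u) + ε * ‖toLp 2 u‖ ^ 2 ≤ quadForm GS u := by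
  set x := t • ((1 - t • A)⁻¹ *ᵥ B *ᵥ u) with hxdef
  have hx : x = t • (A *ᵥ x + B *ᵥ u) := by
    have h : (1 - t • A) *ᵥ x = t • B *ᵥ u := by
      rw [hxdef, mulVec_smul, mulVec_mulVec,
        mul_nonsing_inv _ ((isUnit_iff_isUnit_det _).mp hunit), one_mulVec]
    rw [sub_mulVec, one_mulVec, smul_mulVec, sub_eq_iff_eq_add] at h
    rw [smul_add, add_comm]
    exact h
  have hy : transferMatrix A B C D t *ᵥ u = C *ᵥ x + D *ᵥ u := by
    rw [transferMatrix, add_mulVec, smul_mulVec, ← mulVec_mulVec, ← mulVec_mulVec, ← mulVec_smul,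
      add_comm]
  have hstore : quadForm X x ≤ quadForm X (A *ᵥ x + B *ᵥ u) := by
    conv_lhs => rw [hx, quadForm_smul]
    exact mul_le_of_le_one_left (hX.quadForm_nonneg _) (pow_le_one₀ (norm_nonneg t) ht)
  rw [hy]
  linarith [hdiss x u, mul_nonneg hε (sq_nonneg ‖toLp 2 x‖)]

end IsStrictlyDissipative

end Dissipation

lemma exists_lt_one_forall_l2_opNorm_mul_inv_le {m n : Type*} [Fintype m] [Fintype n]
    [DecidableEq n] (S : Matrix n n ℂ) {ε : ℝ} (hε : 0 < ε) :
    ∃ c < 1, ∀ T : Matrix m n ℂ,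
      (∀ u, ‖toLp 2 (T *ᵥ u)‖ ^ 2 + ε * ‖toLp 2 u‖ ^ 2 ≤ ‖toLp 2 (S *ᵥ u)‖ ^ 2) →
      ‖T * S⁻¹‖ ≤ c := by
  set K := ‖S‖ ^ 2 + ε
  have hK : 0 < K := by positivity
  refine ⟨√(1 - ε / K), (Real.sqrt_lt' one_pos).2 (by simpa using div_pos hε hK),
    fun T hT => ?_⟩
  have hS : IsUnit S.det := by
    refine isUnit_iff_ne_zero.mpr fun hdet => ?_
    obtain ⟨v, hv, hSv⟩ := exists_mulVec_eq_zero_iff.mpr hdet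
    have hv : 0 < ‖toLp 2 v‖ := by simpa using hv
    have := hT v
    rw [hSv, toLp_zero, norm_zero] at this
    nlinarith [sq_nonneg ‖toLp 2 (T *ᵥ v)‖, mul_pos hε (pow_pos hv 2)]
  refine ContinuousLinearMap.opNorm_le_bound _ (Real.sqrt_nonneg _) fun w => ?_
  set u := S⁻¹ *ᵥ ofLp w
  have hSu : S *ᵥ u = ofLp w := by rw [mulVec_mulVec, mul_nonsing_inv _ hS, one_mulVec]
  have hw : ‖w‖ ^ 2 ≤ K * ‖toLp 2 u‖ ^ 2 := by
    have h := l2_opNorm_mulVec S (toLp 2 u)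
    rw [ofLp_toLp, hSu] at h
    calc ‖w‖ ^ 2 ≤ (‖S‖ * ‖toLp 2 u‖) ^ 2 := pow_le_pow_left₀ (norm_nonneg _) (by simpa using h) 2
      _ ≤ K * ‖toLp 2 u‖ ^ 2 := by rw [mul_pow]; gcongr; linarith
  have hTu : ‖toLp 2 (T *ᵥ u)‖ ^ 2 ≤ (1 - ε / K) * ‖w‖ ^ 2 := by
    have h := hT u
    rw [hSu, toLp_ofLp] at h
    have : ε / K * ‖w‖ ^ 2 ≤ ε * ‖toLp 2 u‖ ^ 2 := by
      rw [div_mul_eq_mul_div, div_le_iff₀ hK]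
      nlinarith
    linarith
  have hTw :
      (LinearMap.toContinuousLinearMap (toEuclideanLin (T * S⁻¹))) w = toLp 2 (T *ᵥ u) := by
    simp [u, toLpLin_apply, mulVec_mulVec]
  calc _ = ‖toLp 2 (T *ᵥ u)‖ := congrArg norm hTw
    _ ≤ √((1 - ε / K) * ‖w‖ ^ 2) := by simpa using Real.abs_le_sqrt hTu
    _ = √(1 - ε / K) * ‖w‖ := by rw [Real.sqrt_mul' _ (sq_nonneg _), Real.sqrt_sq (norm_nonneg _)]

end Matrix

theorem strict_bounded_real_lemma_sufficiency_general
    {P : Type*} [Fintype P] [DecidableEq P]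
    (nx : ℕ) (ms mr d : P → ℕ)
    (A : Matrix (Fin nx) (Fin nx) ℂ)
    (B : Matrix (Fin nx) (Σ p : P, Fin (ms p) × Fin (d p)) ℂ)
    (C : Matrix (Σ p : P, Fin (mr p) × Fin (d p)) (Fin nx) ℂ)
    (D : Matrix (Σ p : P, Fin (mr p) × Fin (d p)) (Σ p : P, Fin (ms p) × Fin (d p)) ℂ)
    (X : Matrix (Fin nx) (Fin nx) ℂ) (hX : X.PosDef)
    (Γ : ∀ p : P, Matrix (Fin (d p)) (Fin (d p)) ℂ)
    (hLMI : (-((Matrix.fromBlocks Aᴴ Cᴴ Bᴴ Dᴴ) *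
        (Matrix.fromBlocks X 0 0
          (Matrix.blockDiagonal' fun p => (1 : Matrix (Fin (mr p)) (Fin (mr p)) ℂ) ⊗ₖ Γ p)) *
        (Matrix.fromBlocks A B C D) -
        (Matrix.fromBlocks X 0 0
          (Matrix.blockDiagonal' fun p =>
            (1 : Matrix (Fin (ms p)) (Fin (ms p)) ℂ) ⊗ₖ Γ p)))).PosDef)
    (SR : Matrix (Σ p : P, Fin (mr p) × Fin (d p)) (Σ p : P, Fin (mr p) × Fin (d p)) ℂ)
    (hSR : SR.PosSemidef ∧ SR * SR =
      Matrix.blockDiagonal' fun p => (1 : Matrix (Fin (mr p)) (Fin (mr p)) ℂ) ⊗ₖ Γ p)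
    (SS : Matrix (Σ p : P, Fin (ms p) × Fin (d p)) (Σ p : P, Fin (ms p) × Fin (d p)) ℂ)
    (hSS : SS.PosSemidef ∧ SS * SS =
      Matrix.blockDiagonal' fun p => (1 : Matrix (Fin (ms p)) (Fin (ms p)) ℂ) ⊗ₖ Γ p) :
    (∃ c : ℝ, c < 1 ∧ ∀ lam : ℂ, ‖lam‖ < 1 →
      euclideanOpNorm (SR * (D + lam • (C * (1 - lam • A)⁻¹ * B)) * SS⁻¹) ≤ c) ∧
    ((∀ p, Γ p = 1) →
      (∀ z ∈ spectrum ℂ A, ‖z‖ < 1) ∧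
      ∃ c : ℝ, c < 1 ∧ ∀ lam : ℂ, ‖lam‖ < 1 →
        euclideanOpNorm (D + lam • (C * (1 - lam • A)⁻¹ * B)) ≤ c) := by
  set ΓR := blockDiagonal' fun p => (1 : Matrix (Fin (mr p)) (Fin (mr p)) ℂ) ⊗ₖ Γ p
  set ΓS := blockDiagonal' fun p => (1 : Matrix (Fin (ms p)) (Fin (ms p)) ℂ) ⊗ₖ Γ p
  obtain ⟨ε, hε, hdiss⟩ := exists_isStrictlyDissipative hLMI
  have hΓR : ΓR.PosSemidef := by
    simpa only [hSR.1.isHermitian.eq, hSR.2] using posSemidef_conjTranspose_mul_self SR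
  have hspec : ∀ z ∈ spectrum ℂ A, ‖z‖ < 1 :=
    norm_lt_one_of_mem_spectrum hX.posSemidef fun x hx => hdiss.quadForm_mulVec_lt hε hΓR hx
  have htransfer : ∀ lam : ℂ, ‖lam‖ < 1 → ∀ u,
      quadForm ΓR (transferMatrix A B C D lam *ᵥ u) + ε * ‖toLp 2 u‖ ^ 2 ≤ quadForm ΓS u :=
    fun lam hlam => hdiss.quadForm_transferMatrix_mulVec_add_le hε.le hX.posSemidef hlam.le
      (isUnit_one_sub_smul_of_norm_le_one hspec hlam.le)
  obtain ⟨c, hc, hweighted⟩ :=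
    exists_lt_one_forall_l2_opNorm_mul_inv_le (m := Σ p : P, Fin (mr p) × Fin (d p)) SS hε
  refine ⟨⟨c, hc, fun lam hlam => hweighted _ fun u => ?_⟩, fun hΓ => ⟨hspec, ?_⟩⟩
  · rw [← mulVec_mulVec, ← IsHermitian.quadForm_mul_self hSR.1.isHermitian,
      ← IsHermitian.quadForm_mul_self hSS.1.isHermitian, hSR.2, hSS.2]
    exact htransfer lam hlam u
  · have hΓR1 : ΓR = 1 := by simp only [ΓR, hΓ, one_kronecker_one]; exact blockDiagonal'_one
    have hΓS1 : ΓS = 1 := by simp only [ΓS, hΓ, one_kronecker_one]; exact blockDiagonal'_one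
    obtain ⟨c', hc', hunweighted⟩ :=
      exists_lt_one_forall_l2_opNorm_mul_inv_le (m := Σ p : P, Fin (mr p) × Fin (d p))
        (1 : Matrix (Σ p : P, Fin (ms p) × Fin (d p)) _ ℂ) hε
    refine ⟨c', hc', fun lam hlam => ?_⟩
    have h := hunweighted _ fun u => by
      simpa only [hΓR1, hΓS1, quadForm_one, one_mulVec] using htransfer lam hlam u
    rwa [inv_one, Matrix.mul_one] at h

/-- **Strict Bounded Real Lemma, sufficiency direction** (discrete time, with
structured weights).  If `X ≻ 0` and the LMI
`[A* C*; B* D*] diag(X, Γ_R) [A B; C D] − diag(X, Γ_S) ≺ 0` holds, with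
`Γ_R = ⊕_p (I ⊗ Γ_p)`, `Γ_S = ⊕_p (I ⊗ Γ_p)` and `Γ_p ≻ 0`, then the transfer
function `M̂(λ) = D + λ C (I − λA)⁻¹ B` satisfies
`sup_{|λ|<1} ‖Γ_R^{1/2} M̂(λ) Γ_S^{−1/2}‖ < 1`.  In particular, if all
`Γ_p = I`, then the spectral radius of `A` is `< 1` and
`sup_{|λ|<1} ‖D + λC(I−λA)⁻¹B‖ < 1`. -/
theorem strict_bounded_real_lemma_sufficiency
    {P : Type*} [Fintype P] [DecidableEq P]
    (nx : ℕ) (ms mr d : P → ℕ)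
    (A : Matrix (Fin nx) (Fin nx) ℂ)
    (B : Matrix (Fin nx) (Σ p : P, Fin (ms p) × Fin (d p)) ℂ)
    (C : Matrix (Σ p : P, Fin (mr p) × Fin (d p)) (Fin nx) ℂ)
    (D : Matrix (Σ p : P, Fin (mr p) × Fin (d p)) (Σ p : P, Fin (ms p) × Fin (d p)) ℂ)
    (X : Matrix (Fin nx) (Fin nx) ℂ) (hX : X.PosDef)
    (Γ : ∀ p : P, Matrix (Fin (d p)) (Fin (d p)) ℂ) (hΓ : ∀ p, (Γ p).PosDef)
    (hLMI : (-((Matrix.fromBlocks Aᴴ Cᴴ Bᴴ Dᴴ) *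
        (Matrix.fromBlocks X 0 0
          (Matrix.blockDiagonal' fun p => (1 : Matrix (Fin (mr p)) (Fin (mr p)) ℂ) ⊗ₖ Γ p)) *
        (Matrix.fromBlocks A B C D) -
        (Matrix.fromBlocks X 0 0
          (Matrix.blockDiagonal' fun p =>
            (1 : Matrix (Fin (ms p)) (Fin (ms p)) ℂ) ⊗ₖ Γ p)))).PosDef)
    (SR : Matrix (Σ p : P, Fin (mr p) × Fin (d p)) (Σ p : P, Fin (mr p) × Fin (d p)) ℂ)
    (hSR : SR.PosSemidef ∧ SR * SR =
      Matrix.blockDiagonal' fun p => (1 : Matrix (Fin (mr p)) (Fin (mr p)) ℂ) ⊗ₖ Γ p)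
    (SS : Matrix (Σ p : P, Fin (ms p) × Fin (d p)) (Σ p : P, Fin (ms p) × Fin (d p)) ℂ)
    (hSS : SS.PosSemidef ∧ SS * SS =
      Matrix.blockDiagonal' fun p => (1 : Matrix (Fin (ms p)) (Fin (ms p)) ℂ) ⊗ₖ Γ p) :
    (∃ c : ℝ, c < 1 ∧ ∀ lam : ℂ, ‖lam‖ < 1 →
      euclideanOpNorm (SR * (D + lam • (C * (1 - lam • A)⁻¹ * B)) * SS⁻¹) ≤ c) ∧
    ((∀ p, Γ p = 1) →
      (∀ z ∈ spectrum ℂ A, ‖z‖ < 1) ∧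
      ∃ c : ℝ, c < 1 ∧ ∀ lam : ℂ, ‖lam‖ < 1 →
        euclideanOpNorm (D + lam • (C * (1 - lam • A)⁻¹ * B)) ≤ c) :=
  strict_bounded_real_lemma_sufficiency_general nx ms mr d A B C D X hX Γ hLMI SR hSR SS hSS
end
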